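/- Every propositional formula of weft at most t and depth at most d (built from literals using binary and arbitrary finite conjunctions/disjunctions, with negations only on variables) is logically equivalent to a formula in Δ_{t+1,2^d}, i.e., a formula with at most t+1 alternating levels of big disjunctions/conjunctions whose innermost blocks are conjunctions (or disjunctions) of at most 2^d literals, starting with an outermost big disjunction. -/
import Mathlib


/-- Propositional formulas: literals (positive/negated variables), small (binary)
conjunctions/disjunctions, and big (finite list) conjunctions/disjunctions. -/
inductive PropForm (V : Type) : Type where
  | pos : V → PropForm V
  | neg : V → PropForm V
  | sand : PropForm V → PropForm V → PropForm V
  | sor : PropForm V → PropForm V → PropForm V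
  | band : List (PropForm V) → PropForm V
  | bor : List (PropForm V) → PropForm V

namespace PropForm

variable {V : Type}

def listAnd : List Prop → Prop
  | [] => True
  | a :: l => a ∧ listAnd l

def listOr : List Prop → Prop
  | [] => False
  | a :: l => a ∨ listOr l

mutual
  /-- Truth value of a formula under an assignment. -/
  def eval (S : V → Prop) : PropForm V → Prop
    | pos v => S v
    | neg v => ¬ S v
    | sand a b => eval S a ∧ eval S b
    | sor a b => eval S a ∨ eval S b
    | band l => listAnd (evalList S l)
    | bor l => listOr (evalList S l)
  def evalList (S : V → Prop) : List (PropForm V) → List Prop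
    | [] => []
    | a :: l => eval S a :: evalList S l
end

mutual
  /-- Depth: maximal nesting of all (big or small) conjunctions/disjunctions. -/
  def depth : PropForm V → ℕ
    | pos _ => 0
    | neg _ => 0
    | sand a b => max (depth a) (depth b) + 1
    | sor a b => max (depth a) (depth b) + 1
    | band l => depthList l + 1
    | bor l => depthList l + 1
  def depthList : List (PropForm V) → ℕ
    | [] => 0
    | a :: l => max (depth a) (depthList l)
end

mutual
  /-- Weft: maximal nesting of big conjunctions/disjunctions. -/
  def weft : PropForm V → ℕ
    | pos _ => 0
    | neg _ => 0
    | sand a b => max (weft a) (weft b)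
    | sor a b => max (weft a) (weft b)
    | band l => weftList l + 1
    | bor l => weftList l + 1
  def weftList : List (PropForm V) → ℕ
    | [] => 0
    | a :: l => max (weft a) (weftList l)
end

/-- Literals. -/
def isLit : PropForm V → Prop
  | pos _ => True
  | neg _ => True
  | _ => False

/-- `ConjLits r φ`: φ is an iterated small conjunction of `r` literals. -/
inductive ConjLits : ℕ → PropForm V → Prop
  | base (φ : PropForm V) : isLit φ → ConjLits 1 φ
  | step (r : ℕ) (φ ψ : PropForm V) : ConjLits r φ → isLit ψ → ConjLits (r + 1) (sand φ ψ)

/-- `DisjLits r φ`: φ is an iterated small disjunction of `r` literals. -/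
inductive DisjLits : ℕ → PropForm V → Prop
  | base (φ : PropForm V) : isLit φ → DisjLits 1 φ
  | step (r : ℕ) (φ ψ : PropForm V) : DisjLits r φ → isLit ψ → DisjLits (r + 1) (sor φ ψ)

mutual
  /-- The class Γ_{t,d}: Γ_{0,d} are conjunctions of at most d literals,
  Γ_{t+1,d} are big conjunctions of Δ_{t,d}-formulas. -/
  inductive IsGamma : ℕ → ℕ → PropForm V → Prop
    | base (d r : ℕ) (φ : PropForm V) : r ≤ d → ConjLits r φ → IsGamma 0 d φ
    | step (t d : ℕ) (l : List (PropForm V)) :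
        (∀ φ ∈ l, IsDelta t d φ) → IsGamma (t + 1) d (band l)
  /-- The class Δ_{t,d}: Δ_{0,d} are disjunctions of at most d literals,
  Δ_{t+1,d} are big disjunctions of Γ_{t,d}-formulas. -/
  inductive IsDelta : ℕ → ℕ → PropForm V → Prop
    | base (d r : ℕ) (φ : PropForm V) : r ≤ d → DisjLits r φ → IsDelta 0 d φ
    | step (t d : ℕ) (l : List (PropForm V)) :
        (∀ φ ∈ l, IsGamma t d φ) → IsDelta (t + 1) d (bor l)
end

/-- Logical equivalence of propositional formulas. -/
def Equiv (φ ψ : PropForm V) : Prop := ∀ S : V → Prop, eval S φ ↔ eval S ψ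

end PropForm

namespace PropForm
variable {V : Type}

theorem evalList_append (S : V → Prop) (a b : List (PropForm V)) :
    evalList S (a ++ b) = evalList S a ++ evalList S b := by
  induction a with
  | nil => simp [evalList]
  | cons x xs ih => simp [evalList, ih]

theorem listAnd_append (a b : List Prop) : listAnd (a ++ b) ↔ (listAnd a ∧ listAnd b) := by
  induction a with
  | nil => simp [listAnd]
  | cons x xs ih => simp only [List.cons_append, listAnd, ih]; tauto

theorem listOr_append (a b : List Prop) : listOr (a ++ b) ↔ (listOr a ∨ listOr b) := by
  induction a with
  | nil => simp [listOr]
  | cons x xs ih => simp only [List.cons_append, listOr, ih]; tauto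

theorem gd_mono (t : ℕ) :
    (∀ k k' (φ : PropForm V), k ≤ k' → IsGamma t k φ → IsGamma t k' φ) ∧
    (∀ k k' (φ : PropForm V), k ≤ k' → IsDelta t k φ → IsDelta t k' φ) := by
  induction t with
  | zero =>
    constructor
    · intro k k' φ hk h
      cases h with
      | base _ r _ hr hc => exact IsGamma.base _ _ _ (hr.trans hk) hc
    · intro k k' φ hk h
      cases h with
      | base _ r _ hr hc => exact IsDelta.base _ _ _ (hr.trans hk) hc
  | succ t ih =>
    constructor
    · intro k k' φ hk h
      cases h with
      | step _ _ l hl => exact IsGamma.step _ _ _ (fun ψ hψ => ih.2 _ _ _ hk (hl ψ hψ))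
    · intro k k' φ hk h
      cases h with
      | step _ _ l hl => exact IsDelta.step _ _ _ (fun ψ hψ => ih.1 _ _ _ hk (hl ψ hψ))

theorem conjLits_merge {s : ℕ} {ψ : PropForm V} (h : ConjLits s ψ) :
    ∀ {r : ℕ} {φ : PropForm V}, ConjLits r φ →
    ∃ χ, ConjLits (r + s) χ ∧ ∀ S, eval S χ ↔ (eval S φ ∧ eval S ψ) := by
  induction h with
  | base ψ hψ =>
    intro r φ hφ
    exact ⟨.sand φ ψ, ConjLits.step r φ ψ hφ hψ, fun S => by simp only [eval]⟩
  | step s ψ₁ ψ₂ h₁ h₂ ih =>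
    intro r φ hφ
    obtain ⟨χ, hχ, he⟩ := ih hφ
    refine ⟨.sand χ ψ₂, ?_, fun S => ?_⟩
    · have := ConjLits.step _ _ _ hχ h₂
      simpa [Nat.add_assoc] using this
    · simp only [eval, he S]; tauto

theorem disjLits_merge {s : ℕ} {ψ : PropForm V} (h : DisjLits s ψ) :
    ∀ {r : ℕ} {φ : PropForm V}, DisjLits r φ →
    ∃ χ, DisjLits (r + s) χ ∧ ∀ S, eval S χ ↔ (eval S φ ∨ eval S ψ) := by
  induction h with
  | base ψ hψ =>
    intro r φ hφ
    exact ⟨.sor φ ψ, DisjLits.step r φ ψ hφ hψ, fun S => by simp only [eval]⟩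
  | step s ψ₁ ψ₂ h₁ h₂ ih =>
    intro r φ hφ
    obtain ⟨χ, hχ, he⟩ := ih hφ
    refine ⟨.sor χ ψ₂, ?_, fun S => ?_⟩
    · have := DisjLits.step _ _ _ hχ h₂
      simpa [Nat.add_assoc] using this
    · simp only [eval, he S]; tauto

theorem gamma_and {t k : ℕ} {φ ψ : PropForm V}
    (hφ : IsGamma t k φ) (hψ : IsGamma t k ψ) :
    ∃ χ, IsGamma t (2 * k) χ ∧ ∀ S, eval S χ ↔ (eval S φ ∧ eval S ψ) := by
  cases t with
  | zero =>
    cases hφ with | base _ r _ hr hc =>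
    cases hψ with | base _ r' _ hr' hc' =>
    obtain ⟨χ, hχ, he⟩ := conjLits_merge hc' hc
    exact ⟨χ, IsGamma.base _ _ _ (by omega) hχ, he⟩
  | succ t =>
    cases hφ with | step _ _ l₁ h₁ =>
    cases hψ with | step _ _ l₂ h₂ =>
    refine ⟨.band (l₁ ++ l₂), IsGamma.step _ _ _ ?_, fun S => ?_⟩
    · intro ρ hρ
      rcases List.mem_append.mp hρ with h | h
      · exact (gd_mono t).2 _ _ _ (by omega) (h₁ ρ h)
      · exact (gd_mono t).2 _ _ _ (by omega) (h₂ ρ h)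
    · simp only [eval, evalList_append, listAnd_append]

theorem delta_or {t k : ℕ} {φ ψ : PropForm V}
    (hφ : IsDelta t k φ) (hψ : IsDelta t k ψ) :
    ∃ χ, IsDelta t (2 * k) χ ∧ ∀ S, eval S χ ↔ (eval S φ ∨ eval S ψ) := by
  cases t with
  | zero =>
    cases hφ with | base _ r _ hr hc =>
    cases hψ with | base _ r' _ hr' hc' =>
    obtain ⟨χ, hχ, he⟩ := disjLits_merge hc' hc
    exact ⟨χ, IsDelta.base _ _ _ (by omega) hχ, he⟩
  | succ t =>
    cases hφ with | step _ _ l₁ h₁ =>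
    cases hψ with | step _ _ l₂ h₂ =>
    refine ⟨.bor (l₁ ++ l₂), IsDelta.step _ _ _ ?_, fun S => ?_⟩
    · intro ρ hρ
      rcases List.mem_append.mp hρ with h | h
      · exact (gd_mono t).1 _ _ _ (by omega) (h₁ ρ h)
      · exact (gd_mono t).1 _ _ _ (by omega) (h₂ ρ h)
    · simp only [eval, evalList_append, listOr_append]

theorem pick {P : PropForm V → Prop} :
    ∀ l : List (PropForm V), (∀ a ∈ l, ∃ b, P b ∧ Equiv a b) →
    ∃ m : List (PropForm V), (∀ b ∈ m, P b) ∧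
      (∀ S, listAnd (evalList S m) ↔ listAnd (evalList S l)) ∧
      (∀ S, listOr (evalList S m) ↔ listOr (evalList S l)) := by
  intro l
  induction l with
  | nil => exact fun _ => ⟨[], by simp, fun S => Iff.rfl, fun S => Iff.rfl⟩
  | cons a l ih =>
    intro h
    obtain ⟨b, hb, he⟩ := h a (by simp)
    obtain ⟨m, hm, h₁, h₂⟩ := ih (fun x hx => h x (by simp [hx]))
    refine ⟨b :: m, ?_, fun S => ?_, fun S => ?_⟩
    · intro x hx
      rcases List.mem_cons.mp hx with rfl | hx
      · exact hb
      · exact hm x hx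
    · simp only [evalList, listAnd, h₁ S, he S]
    · simp only [evalList, listOr, h₂ S, he S]

theorem band_flatten {t k : ℕ} :
    ∀ L : List (PropForm V), (∀ γ ∈ L, IsGamma (t+1) k γ) →
    ∃ m, (∀ δ ∈ m, IsDelta t k δ) ∧
      ∀ S, listAnd (evalList S m) ↔ listAnd (evalList S L) := by
  intro L
  induction L with
  | nil => exact fun _ => ⟨[], by simp, fun S => Iff.rfl⟩
  | cons γ L ih =>
    intro h
    obtain ⟨m', hm', he'⟩ := ih (fun x hx => h x (by simp [hx]))
    have hγ := h γ (by simp)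
    cases hγ with
    | step _ _ l hl =>
      refine ⟨l ++ m', ?_, fun S => ?_⟩
      · intro δ hδ
        rcases List.mem_append.mp hδ with h' | h'
        · exact hl δ h'
        · exact hm' δ h'
      · simp only [evalList_append, listAnd_append, evalList, listAnd, he' S, eval]

theorem bor_flatten {t k : ℕ} :
    ∀ L : List (PropForm V), (∀ δ ∈ L, IsDelta (t+1) k δ) →
    ∃ m, (∀ γ ∈ m, IsGamma t k γ) ∧
      ∀ S, listOr (evalList S m) ↔ listOr (evalList S L) := by
  intro L
  induction L with
  | nil => exact fun _ => ⟨[], by simp, fun S => Iff.rfl⟩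
  | cons δ L ih =>
    intro h
    obtain ⟨m', hm', he'⟩ := ih (fun x hx => h x (by simp [hx]))
    have hδ := h δ (by simp)
    cases hδ with
    | step _ _ l hl =>
      refine ⟨l ++ m', ?_, fun S => ?_⟩
      · intro γ hγ
        rcases List.mem_append.mp hγ with h' | h'
        · exact hl γ h'
        · exact hm' γ h'
      · simp only [evalList_append, listOr_append, evalList, listOr, he' S, eval]

theorem gamma_row {t k : ℕ} {p : PropForm V} (hp : IsGamma t k p) :
    ∀ Q : List (PropForm V), (∀ q ∈ Q, IsGamma t k q) →
    ∃ R, (∀ r ∈ R, IsGamma t (2*k) r) ∧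
      ∀ S, listOr (evalList S R) ↔ (eval S p ∧ listOr (evalList S Q)) := by
  intro Q
  induction Q with
  | nil => exact fun _ => ⟨[], by simp, fun S => by simp [evalList, listOr]⟩
  | cons q Q ih =>
    intro h
    obtain ⟨R', hR', he'⟩ := ih (fun x hx => h x (by simp [hx]))
    obtain ⟨χ, hχ, heχ⟩ := gamma_and hp (h q (by simp))
    refine ⟨χ :: R', ?_, fun S => ?_⟩
    · intro r hr
      rcases List.mem_cons.mp hr with rfl | hr
      · exact hχ
      · exact hR' r hr
    · simp only [evalList, listOr, heχ S, he' S]; tauto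

theorem gamma_prod {t k : ℕ} :
    ∀ (P Q : List (PropForm V)),
    (∀ p ∈ P, IsGamma t k p) → (∀ q ∈ Q, IsGamma t k q) →
    ∃ R, (∀ r ∈ R, IsGamma t (2*k) r) ∧
      ∀ S, listOr (evalList S R) ↔ (listOr (evalList S P) ∧ listOr (evalList S Q)) := by
  intro P Q
  induction P with
  | nil => exact fun _ _ => ⟨[], by simp, fun S => by simp [evalList, listOr]⟩
  | cons p P ih =>
    intro hP hQ
    obtain ⟨R', hR', he'⟩ := ih (fun x hx => hP x (by simp [hx])) hQ
    obtain ⟨Rp, hRp, hep⟩ := gamma_row (hP p (by simp)) Q hQ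
    refine ⟨Rp ++ R', ?_, fun S => ?_⟩
    · intro r hr
      rcases List.mem_append.mp hr with hr | hr
      · exact hRp r hr
      · exact hR' r hr
    · simp only [evalList_append, listOr_append, evalList, listOr, hep S, he' S]; tauto

theorem delta_row {t k : ℕ} {p : PropForm V} (hp : IsDelta t k p) :
    ∀ Q : List (PropForm V), (∀ q ∈ Q, IsDelta t k q) →
    ∃ R, (∀ r ∈ R, IsDelta t (2*k) r) ∧
      ∀ S, listAnd (evalList S R) ↔ (eval S p ∨ listAnd (evalList S Q)) := by
  intro Q
  induction Q with
  | nil => exact fun _ => ⟨[], by simp, fun S => by simp [evalList, listAnd]⟩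
  | cons q Q ih =>
    intro h
    obtain ⟨R', hR', he'⟩ := ih (fun x hx => h x (by simp [hx]))
    obtain ⟨χ, hχ, heχ⟩ := delta_or hp (h q (by simp))
    refine ⟨χ :: R', ?_, fun S => ?_⟩
    · intro r hr
      rcases List.mem_cons.mp hr with rfl | hr
      · exact hχ
      · exact hR' r hr
    · simp only [evalList, listAnd, heχ S, he' S]; tauto

theorem delta_prod {t k : ℕ} :
    ∀ (P Q : List (PropForm V)),
    (∀ p ∈ P, IsDelta t k p) → (∀ q ∈ Q, IsDelta t k q) →
    ∃ R, (∀ r ∈ R, IsDelta t (2*k) r) ∧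
      ∀ S, listAnd (evalList S R) ↔ (listAnd (evalList S P) ∨ listAnd (evalList S Q)) := by
  intro P Q
  induction P with
  | nil => exact fun _ _ => ⟨[], by simp, fun S => by simp [evalList, listAnd]⟩
  | cons p P ih =>
    intro hP hQ
    obtain ⟨R', hR', he'⟩ := ih (fun x hx => hP x (by simp [hx])) hQ
    obtain ⟨Rp, hRp, hep⟩ := delta_row (hP p (by simp)) Q hQ
    refine ⟨Rp ++ R', ?_, fun S => ?_⟩
    · intro r hr
      rcases List.mem_append.mp hr with hr | hr
      · exact hRp r hr
      · exact hR' r hr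
    · simp only [evalList_append, listAnd_append, evalList, listAnd, hep S, he' S]; tauto

theorem lit_lift : ∀ (t k : ℕ), 1 ≤ k → ∀ φ : PropForm V, isLit φ →
    (∃ γ, IsGamma t k γ ∧ Equiv φ γ) ∧ (∃ δ, IsDelta t k δ ∧ Equiv φ δ) := by
  intro t
  induction t with
  | zero =>
    intro k hk φ hφ
    exact ⟨⟨φ, IsGamma.base _ 1 _ hk (ConjLits.base φ hφ), fun S => Iff.rfl⟩,
           ⟨φ, IsDelta.base _ 1 _ hk (DisjLits.base φ hφ), fun S => Iff.rfl⟩⟩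
  | succ t ih =>
    intro k hk φ hφ
    obtain ⟨⟨γ, hγ, heγ⟩, ⟨δ, hδ, heδ⟩⟩ := ih k hk φ hφ
    constructor
    · refine ⟨.band [δ], IsGamma.step _ _ _ (by simpa using hδ), fun S => ?_⟩
      simpa only [eval, evalList, listAnd, and_true] using heδ S
    · refine ⟨.bor [γ], IsDelta.step _ _ _ (by simpa using hγ), fun S => ?_⟩
      simpa only [eval, evalList, listOr, or_false] using heγ S

theorem weft_le_weftList {a : PropForm V} :
    ∀ {l : List (PropForm V)}, a ∈ l → weft a ≤ weftList l := by
  intro l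
  induction l with
  | nil => simp
  | cons b l ih =>
    intro h
    rcases List.mem_cons.mp h with rfl | h
    · simp [weftList]
    · exact le_trans (ih h) (by simp [weftList])

theorem depth_le_depthList {a : PropForm V} :
    ∀ {l : List (PropForm V)}, a ∈ l → depth a ≤ depthList l := by
  intro l
  induction l with
  | nil => simp
  | cons b l ih =>
    intro h
    rcases List.mem_cons.mp h with rfl | h
    · simp [depthList]
    · exact le_trans (ih h) (by simp [depthList])

theorem main_norm : ∀ (n : ℕ) (φ : PropForm V), sizeOf φ ≤ n →
    ∀ t d, weft φ ≤ t → depth φ ≤ d →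
    (∃ γ, IsGamma (t+1) (2^d) γ ∧ Equiv φ γ) ∧
    (∃ δ, IsDelta (t+1) (2^d) δ ∧ Equiv φ δ) := by
  intro n
  induction n using Nat.strong_induction_on with
  | _ n IH =>
  intro φ hn t d hw hd
  cases φ with
  | pos v => exact lit_lift _ _ Nat.one_le_two_pow _ trivial
  | neg v => exact lit_lift _ _ Nat.one_le_two_pow _ trivial
  | sand a b =>
    simp only [weft, depth] at hw hd
    obtain ⟨d', rfl⟩ : ∃ d', d = d' + 1 := ⟨d - 1, by omega⟩
    have hsz : 1 + sizeOf a + sizeOf b ≤ n := by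
      have h := hn; simp at h; omega
    have hmd : max (depth a) (depth b) ≤ d' := by omega
    obtain ⟨⟨γa, hγa, hea⟩, ⟨δa, hδa, hda⟩⟩ :=
      IH (n-1) (by omega) a (by omega) t d'
        ((le_max_left _ _).trans hw) ((le_max_left _ _).trans hmd)
    obtain ⟨⟨γb, hγb, heb⟩, ⟨δb, hδb, hdb⟩⟩ :=
      IH (n-1) (by omega) b (by omega) t d'
        ((le_max_right _ _).trans hw) ((le_max_right _ _).trans hmd)
    have hpow : (2:ℕ) ^ d' ≤ 2 ^ (d'+1) := Nat.pow_le_pow_right (by norm_num) (by omega)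
    have hpow2 : 2 * 2 ^ d' = 2 ^ (d'+1) := by rw [pow_succ]; ring
    constructor
    · cases hγa with | step _ _ la hla =>
      cases hγb with | step _ _ lb hlb =>
      refine ⟨.band (la ++ lb), IsGamma.step _ _ _ ?_, fun S => ?_⟩
      · intro ρ hρ
        rcases List.mem_append.mp hρ with h | h
        · exact (gd_mono t).2 _ _ _ hpow (hla ρ h)
        · exact (gd_mono t).2 _ _ _ hpow (hlb ρ h)
      · have h1 := hea S; have h2 := heb S
        simp only [eval, evalList_append, listAnd_append] at h1 h2 ⊢
        tauto
    · cases hδa with | step _ _ la hla =>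
      cases hδb with | step _ _ lb hlb =>
      obtain ⟨R, hR, heR⟩ := gamma_prod la lb hla hlb
      refine ⟨.bor R, IsDelta.step _ _ _ (fun r hr => hpow2 ▸ hR r hr), fun S => ?_⟩
      have h1 := hda S; have h2 := hdb S; have h3 := heR S
      simp only [eval] at h1 h2 ⊢
      tauto
  | sor a b =>
    simp only [weft, depth] at hw hd
    obtain ⟨d', rfl⟩ : ∃ d', d = d' + 1 := ⟨d - 1, by omega⟩
    have hsz : 1 + sizeOf a + sizeOf b ≤ n := by
      have h := hn; simp at h; omega
    have hmd : max (depth a) (depth b) ≤ d' := by omega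
    obtain ⟨⟨γa, hγa, hea⟩, ⟨δa, hδa, hda⟩⟩ :=
      IH (n-1) (by omega) a (by omega) t d'
        ((le_max_left _ _).trans hw) ((le_max_left _ _).trans hmd)
    obtain ⟨⟨γb, hγb, heb⟩, ⟨δb, hδb, hdb⟩⟩ :=
      IH (n-1) (by omega) b (by omega) t d'
        ((le_max_right _ _).trans hw) ((le_max_right _ _).trans hmd)
    have hpow : (2:ℕ) ^ d' ≤ 2 ^ (d'+1) := Nat.pow_le_pow_right (by norm_num) (by omega)
    have hpow2 : 2 * 2 ^ d' = 2 ^ (d'+1) := by rw [pow_succ]; ring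
    constructor
    · cases hγa with | step _ _ la hla =>
      cases hγb with | step _ _ lb hlb =>
      obtain ⟨R, hR, heR⟩ := delta_prod la lb hla hlb
      refine ⟨.band R, IsGamma.step _ _ _ (fun r hr => hpow2 ▸ hR r hr), fun S => ?_⟩
      have h1 := hea S; have h2 := heb S; have h3 := heR S
      simp only [eval] at h1 h2 ⊢
      tauto
    · cases hδa with | step _ _ la hla =>
      cases hδb with | step _ _ lb hlb =>
      refine ⟨.bor (la ++ lb), IsDelta.step _ _ _ ?_, fun S => ?_⟩
      · intro ρ hρ
        rcases List.mem_append.mp hρ with h | h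
        · exact (gd_mono t).1 _ _ _ hpow (hla ρ h)
        · exact (gd_mono t).1 _ _ _ hpow (hlb ρ h)
      · have h1 := hda S; have h2 := hdb S
        simp only [eval, evalList_append, listOr_append] at h1 h2 ⊢
        tauto
  | band l =>
    simp only [weft, depth] at hw hd
    obtain ⟨t', rfl⟩ : ∃ t', t = t' + 1 := ⟨t - 1, by omega⟩
    obtain ⟨d', rfl⟩ : ∃ d', d = d' + 1 := ⟨d - 1, by omega⟩
    have hpow : (2:ℕ) ^ d' ≤ 2 ^ (d'+1) := Nat.pow_le_pow_right (by norm_num) (by omega)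
    have hsl : sizeOf (PropForm.band l : PropForm V) = 1 + sizeOf l := by simp
    have hmem : ∀ a ∈ l, (∃ γ, IsGamma (t'+1) (2^d') γ ∧ Equiv a γ) ∧
        (∃ δ, IsDelta (t'+1) (2^d') δ ∧ Equiv a δ) := by
      intro a ha
      have hsa : sizeOf a < sizeOf l := List.sizeOf_lt_of_mem ha
      exact IH (n-1) (by omega) a (by omega) t' d'
        ((weft_le_weftList ha).trans (by omega)) ((depth_le_depthList ha).trans (by omega))
    constructor
    · obtain ⟨m, hm, hAnd, _⟩ := pick l (fun a ha => (hmem a ha).2)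
      refine ⟨.band m, IsGamma.step _ _ _
        (fun δ hδ => (gd_mono (t'+1)).2 _ _ _ hpow (hm δ hδ)), fun S => ?_⟩
      simp only [eval]
      exact (hAnd S).symm
    · obtain ⟨m, hm, hAnd, _⟩ := pick l (fun a ha => (hmem a ha).1)
      obtain ⟨m', hm', hAnd'⟩ := band_flatten m hm
      refine ⟨.bor [.band m'], IsDelta.step _ _ _ ?_, fun S => ?_⟩
      · intro x hx
        simp only [List.mem_singleton] at hx
        subst hx
        exact IsGamma.step _ _ _ (fun δ hδ => (gd_mono t').2 _ _ _ hpow (hm' δ hδ))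
      · have h3 := (hAnd' S).trans (hAnd S)
        simp only [eval, evalList, listOr] at *
        tauto
  | bor l =>
    simp only [weft, depth] at hw hd
    obtain ⟨t', rfl⟩ : ∃ t', t = t' + 1 := ⟨t - 1, by omega⟩
    obtain ⟨d', rfl⟩ : ∃ d', d = d' + 1 := ⟨d - 1, by omega⟩
    have hpow : (2:ℕ) ^ d' ≤ 2 ^ (d'+1) := Nat.pow_le_pow_right (by norm_num) (by omega)
    have hsl : sizeOf (PropForm.bor l : PropForm V) = 1 + sizeOf l := by simp
    have hmem : ∀ a ∈ l, (∃ γ, IsGamma (t'+1) (2^d') γ ∧ Equiv a γ) ∧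
        (∃ δ, IsDelta (t'+1) (2^d') δ ∧ Equiv a δ) := by
      intro a ha
      have hsa : sizeOf a < sizeOf l := List.sizeOf_lt_of_mem ha
      exact IH (n-1) (by omega) a (by omega) t' d'
        ((weft_le_weftList ha).trans (by omega)) ((depth_le_depthList ha).trans (by omega))
    constructor
    · obtain ⟨m, hm, _, hOr⟩ := pick l (fun a ha => (hmem a ha).2)
      obtain ⟨m', hm', hOr'⟩ := bor_flatten m hm
      refine ⟨.band [.bor m'], IsGamma.step _ _ _ ?_, fun S => ?_⟩
      · intro x hx
        simp only [List.mem_singleton] at hx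
        subst hx
        exact IsDelta.step _ _ _ (fun γ hγ => (gd_mono t').1 _ _ _ hpow (hm' γ hγ))
      · have h3 := (hOr' S).trans (hOr S)
        simp only [eval, evalList, listAnd] at *
        tauto
    · obtain ⟨m, hm, _, hOr⟩ := pick l (fun a ha => (hmem a ha).1)
      refine ⟨.bor m, IsDelta.step _ _ _
        (fun γ hγ => (gd_mono (t'+1)).1 _ _ _ hpow (hm γ hγ)), fun S => ?_⟩
      simp only [eval]
      exact (hOr S).symm

end PropForm


open PropForm in
/-- Propositional Normalisation Lemma: every formula of weft ≤ t and depth ≤ d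
(negations only on variables) is equivalent to a formula in Δ_{t+1,2^d}. -/
theorem propositional_normalisation {V : Type} (t d : ℕ) (φ : PropForm V)
    (hw : weft φ ≤ t) (hd : depth φ ≤ d) :
    ∃ ψ : PropForm V, IsDelta (t + 1) (2 ^ d) ψ ∧ PropForm.Equiv φ ψ :=
  (main_norm (sizeOf φ) φ le_rfl t d hw hd).2
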